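/- arXiv:1005.5522 — 6 statements merged into one kernel-verified Lean document; each statement's English description precedes it below -/
import Mathlib

section
/- If p is hyperbolic with respect to d and e lies in the hyperbolicity cone C(d), then for all γ, δ > 0 the closed segment [γ·e, δ·d] is contained in C(d); in particular [e, d] ⊆ C(d). -/
/-- If `e` lies in the hyperbolicity cone `C(d)`, then for all `γ, δ > 0`
the segment `[γ•e, δ•d]` is contained in `C(d)`; in particular `[e, d] ⊆ C(d)`. -/
theorem segment_subset_hyperbolicity_cone {X : Type*} [AddCommGroup X] [Module ℝ X]
    (m : ℕ) (p : X → ℝ) (d : X)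
    (hhom : ∀ (c : ℝ) (x : X), p (c • x) = c ^ m * p x)
    (hpd : 0 < p d)
    (lam : X → Fin m → ℝ)
    (hmono : ∀ x, Monotone (lam x))
    (hroots : ∀ (x : X) (t : ℝ), p (x + t • d) = p d * ∏ i, (t + lam x i))
    (e : X) (he : e ∈ {x : X | ∀ t : ℝ, 0 ≤ t → p (x + t • d) ≠ 0}) :
    (∀ γ δ : ℝ, 0 < γ → 0 < δ →
        segment ℝ (γ • e) (δ • d) ⊆ {x : X | ∀ t : ℝ, 0 ≤ t → p (x + t • d) ≠ 0}) ∧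
    segment ℝ e d ⊆ {x : X | ∀ t : ℝ, 0 ≤ t → p (x + t • d) ≠ 0} := by
  have key : ∀ γ δ : ℝ, 0 < γ → 0 < δ →
      segment ℝ (γ • e) (δ • d) ⊆ {x : X | ∀ t : ℝ, 0 ≤ t → p (x + t • d) ≠ 0} := by
    intro γ δ hγ hδ x hx t ht
    obtain ⟨a, b, ha, hb, hab, rfl⟩ := hx
    have hx' : a • γ • e + b • δ • d + t • d = (a * γ) • e + (b * δ + t) • d := by
      rw [smul_smul, smul_smul, add_smul]; abel
    rw [hx']
    rcases eq_or_lt_of_le ha with ha0 | ha0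
    · have hb1 : b = 1 := by linarith
      have hs : 0 < b * δ + t := by nlinarith
      rw [← ha0, zero_mul, zero_smul, zero_add, hhom]
      exact ne_of_gt (mul_pos (pow_pos hs m) hpd)
    · set c := a * γ with hc
      have hcpos : 0 < c := mul_pos ha0 hγ
      have hs : 0 ≤ b * δ + t := by nlinarith
      have hrw : c • e + (b * δ + t) • d = c • (e + ((b * δ + t) / c) • d) := by
        rw [smul_add, smul_smul, mul_div_cancel₀ _ (ne_of_gt hcpos)]
      rw [hrw, hhom]
      exact mul_ne_zero (pow_ne_zero m (ne_of_gt hcpos))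
        (he _ (div_nonneg hs hcpos.le))
  refine ⟨key, ?_⟩
  have := key 1 1 one_pos one_pos
  simpa using this
end

section
/- The hyperbolicity cone C(d) is a path-connected subset of {x ∈ X : p(x) > 0} containing d; in fact any two points e, f ∈ C(d) are connected by the polygonal path [e,d] ∪ [d,f] inside C(d). -/
/-- The hyperbolicity cone `C(d)` is a path-connected subset of
`{x | p x > 0}` containing `d`; any `e, f ∈ C(d)` are joined by the polygonal
path `[e,d] ∪ [d,f]` inside `C(d)`. -/
theorem hyperbolicity_cone_pathConnected
    {X : Type*} [NormedAddCommGroup X] [NormedSpace ℝ X]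
    (m : ℕ) (p : X → ℝ) (d : X)
    (hhom : ∀ (c : ℝ) (x : X), p (c • x) = c ^ m * p x)
    (hpd : 0 < p d)
    (lam : X → Fin m → ℝ)
    (hmono : ∀ x, Monotone (lam x))
    (hroots : ∀ (x : X) (t : ℝ), p (x + t • d) = p d * ∏ i, (t + lam x i)) :
    d ∈ {x : X | ∀ t : ℝ, 0 ≤ t → p (x + t • d) ≠ 0} ∧
    {x : X | ∀ t : ℝ, 0 ≤ t → p (x + t • d) ≠ 0} ⊆ {x : X | 0 < p x} ∧
    (∀ e f : X, e ∈ {x : X | ∀ t : ℝ, 0 ≤ t → p (x + t • d) ≠ 0} →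
        f ∈ {x : X | ∀ t : ℝ, 0 ≤ t → p (x + t • d) ≠ 0} →
        segment ℝ e d ∪ segment ℝ d f ⊆ {x : X | ∀ t : ℝ, 0 ≤ t → p (x + t • d) ≠ 0}) ∧
    IsPathConnected {x : X | ∀ t : ℝ, 0 ≤ t → p (x + t • d) ≠ 0} := by
  set C := {x : X | ∀ t : ℝ, 0 ≤ t → p (x + t • d) ≠ 0} with hCdef
  have hdC : d ∈ C := by
    intro t ht
    have h1 : d + t • d = (1 + t) • d := by rw [add_smul, one_smul]
    rw [h1, hhom]
    exact ne_of_gt (mul_pos (pow_pos (by linarith) m) hpd)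
  have key : ∀ x ∈ C, ∀ i, 0 < lam x i := by
    intro x hx i
    by_contra h
    push_neg at h
    apply hx (-lam x i) (by linarith)
    rw [hroots]
    rw [Finset.prod_eq_zero (Finset.mem_univ i) (by ring), mul_zero]
  have hsub : C ⊆ {x : X | 0 < p x} := by
    intro x hx
    have hx0 : p x = p d * ∏ i, lam x i := by
      have := hroots x 0
      simpa using this
    show 0 < p x
    rw [hx0]
    exact mul_pos hpd (Finset.prod_pos fun i _ => key x hx i)
  have segC : ∀ e ∈ C, segment ℝ e d ⊆ C := by
    intro e he x hxseg
    obtain ⟨a, b, ha, hb, hab, rfl⟩ := hxseg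
    intro t ht
    rcases ha.eq_or_lt with h0 | h0
    · have hb1 : b = 1 := by linarith
      have h1 : a • e + b • d + t • d = (1 + t) • d := by
        rw [← h0, hb1, add_smul, one_smul, zero_smul, zero_add]
      rw [h1, hhom]
      exact ne_of_gt (mul_pos (pow_pos (by linarith) m) hpd)
    · have hcalc : a * ((b + t) / a) = b + t := by field_simp
      have h1 : a • e + b • d + t • d = a • (e + ((b + t) / a) • d) := by
        rw [smul_add, smul_smul, hcalc, add_assoc, ← add_smul]
      rw [h1, hhom]
      exact mul_ne_zero (pow_ne_zero m (ne_of_gt h0))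
        (he ((b + t) / a) (div_nonneg (by linarith) h0.le))
  refine ⟨hdC, hsub, ?_, ?_⟩
  · intro e f he hf x hx
    rcases hx with hx | hx
    · exact segC e he hx
    · rw [segment_symm] at hx
      exact segC f hf hx
  · refine ⟨d, hdC, ?_⟩
    intro y hy
    have h1 : JoinedIn (segment ℝ d y) d y :=
      ((convex_segment d y).isPathConnected ⟨d, left_mem_segment ℝ d y⟩).joinedIn d
        (left_mem_segment ℝ d y) y (right_mem_segment ℝ d y)
    exact h1.mono (by rw [segment_symm]; exact segC y hy)
end

section
/- If p is hyperbolic of degree m with respect to d, then the directional derivative polynomial p'(x) = (d/dt) p(x + t·d)|_{t=0} is itself hyperbolic with respect to d, by the root interlacing property of polynomials with all real roots. -/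
open Polynomial

lemma aux_deriv_prod (n : ℕ) (hn : 1 ≤ n) (c : Fin n → ℝ) :
    ∃ mu : Fin (n-1) → ℝ, ∀ t : ℝ,
      (Polynomial.derivative (∏ i, (Polynomial.X + Polynomial.C (c i)))).eval t
        = n * ∏ i, (t + mu i) := by
  have hXC : ∀ a : ℝ, (X + C a).roots = {-a} := fun a => by
    rw [show X + C a = X - C (-a) by rw [map_neg, sub_neg_eq_add], roots_X_sub_C]
  set P : ℝ[X] := ∏ i, (X + C (c i)) with hP
  have hmonic : P.Monic := monic_prod_of_monic _ _ fun i _ => monic_X_add_C (c i)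
  have hdeg : P.natDegree = n := by
    rw [hP, natDegree_prod _ _ (fun i _ => (monic_X_add_C (c i)).ne_zero)]
    simp [natDegree_X_add_C]
  have hrootsP : Multiset.card P.roots = n := by
    rw [hP, roots_prod _ _ (by rw [← hP]; exact hmonic.ne_zero)]
    simp [hXC]
  have h3 := P.natDegree_derivative_le
  rw [hdeg] at h3
  have hcard : Multiset.card P.derivative.roots = n - 1 := by
    have h1 := P.card_roots_le_derivative
    have h2 := P.derivative.card_roots'
    omega
  have hdegP' : P.derivative.natDegree = n - 1 := by
    have h2 := P.derivative.card_roots'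
    omega
  have hlead : P.derivative.leadingCoeff = n := by
    rw [leadingCoeff, hdegP', coeff_derivative, show n - 1 + 1 = n by omega]
    have hc := hmonic.coeff_natDegree
    rw [hdeg] at hc
    rw [hc, one_mul]
    push_cast [Nat.cast_sub hn]
    ring
  have hfact := C_leadingCoeff_mul_prod_multiset_X_sub_C (p := P.derivative)
    (by rw [hcard, hdegP'])
  set l := P.derivative.roots.toList with hl
  have hlen : l.length = n - 1 := by rw [hl, Multiset.length_toList, hcard]
  refine ⟨fun i => -(l.getD i 0), fun t => ?_⟩
  have hev : P.derivative.eval t = n * (l.map (fun r => t - r)).prod := by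
    conv_lhs => rw [← hfact]
    rw [eval_mul, eval_C, hlead]
    congr 1
    rw [eval_multiset_prod]
    rw [show P.derivative.roots = (l : Multiset ℝ) by rw [hl, Multiset.coe_toList]]
    simp [Function.comp_def]
  rw [hev]
  congr 1
  have heq : (l.map (fun r => t - r)).prod = ∏ i : Fin l.length, (t - l.get i) := by
    rw [← List.prod_ofFn (f := fun i : Fin l.length => t - l.get i)]
    congr 1
    conv_lhs => rw [← List.ofFn_get l]
    rw [List.map_ofFn]
    rfl
  rw [heq, ← Fin.prod_congr' (fun i : Fin l.length => (t - l.get i)) hlen.symm]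
  apply Finset.prod_congr rfl
  intro i _
  have hi : (i : ℕ) < l.length := by omega
  simp only [List.getD_eq_getElem l 0 hi, List.get_eq_getElem, Fin.coe_cast, sub_eq_add_neg]

/-- If `p` is hyperbolic of degree `m ≥ 2` with respect to `d`, then the
directional derivative polynomial `p'(x) = (d/dt) p(x + t•d)|_{t=0}` is itself
hyperbolic with respect to `d` (of degree `m − 1`): `p'(d) > 0` and every line
`x + ℝ•d` gives a real-rooted polynomial of degree `m − 1` for `p'`. -/
theorem derivative_polynomial_hyperbolic {X : Type*} [AddCommGroup X] [Module ℝ X]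
    (m : ℕ) (hm : 2 ≤ m) (p : X → ℝ) (d : X)
    (hhom : ∀ (c : ℝ) (x : X), p (c • x) = c ^ m * p x)
    (hpd : 0 < p d)
    (lam : X → Fin m → ℝ)
    (hmono : ∀ x, Monotone (lam x))
    (hroots : ∀ (x : X) (t : ℝ), p (x + t • d) = p d * ∏ i, (t + lam x i)) :
    0 < deriv (fun t : ℝ => p (d + t • d)) 0 ∧
    ∃ mu : X → Fin (m - 1) → ℝ, ∀ (x : X) (t : ℝ),
      deriv (fun s : ℝ => p ((x + t • d) + s • d)) 0
        = deriv (fun s : ℝ => p (d + s • d)) 0 * ∏ i, (t + mu x i) := by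
  have hm1 : 1 ≤ m := le_trans one_le_two hm
  have hD : deriv (fun t : ℝ => p (d + t • d)) 0 = m * p d := by
    have hfun : (fun t : ℝ => p (d + t • d)) = fun t => (1 + t) ^ m * p d := by
      funext t
      rw [show d + t • d = (1 + t) • d by rw [add_smul, one_smul], hhom]
    rw [hfun]
    have h : HasDerivAt (fun t : ℝ => (1 + t) ^ m * p d)
        ((m * (1 + (0:ℝ)) ^ (m - 1) * 1) * p d) 0 :=
      ((((hasDerivAt_id (0:ℝ)).const_add 1).pow m)).mul_const _
    rw [h.deriv]
    simp
  have key : ∀ (x : X) (t : ℝ), deriv (fun s : ℝ => p ((x + t • d) + s • d)) 0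
      = p d * (Polynomial.derivative (∏ i, (Polynomial.X + Polynomial.C (lam x i)))).eval t := by
    intro x t
    set P : Polynomial ℝ := ∏ i, (Polynomial.X + Polynomial.C (lam x i)) with hPdef
    have hfun : (fun s : ℝ => p ((x + t • d) + s • d)) = fun s => p d * P.eval (t + s) := by
      funext s
      rw [add_assoc, ← add_smul, hroots, hPdef]
      simp [Polynomial.eval_prod]
    rw [hfun]
    have h : HasDerivAt (fun s : ℝ => P.eval (t + s))
        ((Polynomial.derivative P).eval (t + 0) * 1) 0 :=
      (P.hasDerivAt (t + 0)).comp 0 ((hasDerivAt_id (0:ℝ)).const_add t)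
    rw [(h.const_mul (p d)).deriv]
    simp
  constructor
  · rw [hD]; positivity
  · refine ⟨fun x => Classical.choose (aux_deriv_prod m hm1 (lam x)), fun x t => ?_⟩
    rw [key, hD, Classical.choose_spec (aux_deriv_prod m hm1 (lam x)) t]
    ring
end

section
/- For the elementary symmetric polynomial E_m on ℝ^m and a direction d ∈ ℝ^m with all positive entries, the k-th directional derivative along d satisfies E_m^{(k)}(x) = k! · E_m(d) · E_{m−k}(x./d), where x./d denotes the componentwise quotient. -/
/-!
Writing `x i + t * d i = d i * (t + x i / d i)`, the function is `(∏ i, d i)` times the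
polynomial `∏ i, (X + C (x i / d i))`. The `k`-th derivative at `0` of a polynomial is `k!` times
its `k`-th coefficient, and by Vieta's formula that coefficient is `e_{m-k}(x / d)`.
-/

open Polynomial Finset

namespace Polynomial

variable {𝕜 : Type*} [NontriviallyNormedField 𝕜]

theorem iteratedDeriv_eval (p : 𝕜[X]) (k : ℕ) :
    iteratedDeriv k (fun t => p.eval t) = fun t => (derivative^[k] p).eval t := by
  induction k generalizing p with
  | zero => simp
  | succ k ih =>
    have hderiv : _root_.deriv (fun t => p.eval t) = fun t => p.derivative.eval t := by
      ext t
      exact p.deriv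
    rw [iteratedDeriv_succ', Function.iterate_succ_apply, ← ih, hderiv]

theorem iteratedDeriv_eval_zero (p : 𝕜[X]) (k : ℕ) :
    iteratedDeriv k (fun t => p.eval t) 0 = k.factorial * p.coeff k := by
  simp only [iteratedDeriv_eval]
  rw [← coeff_zero_eq_eval_zero, coeff_iterate_derivative, zero_add,
    Nat.descFactorial_self, nsmul_eq_mul]

end Polynomial

/-- For `E_m(x) = ∏ i, x i` on `ℝ^m` and a direction `d` with all
positive entries, the `k`-th directional derivative along `d` satisfies
`E_m^{(k)}(x) = k! * E_m(d) * E_{m−k}(x ./ d)` (componentwise quotient). -/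
theorem iteratedDeriv_prod_add_dir (m k : ℕ) (hk : k ≤ m)
    (d : Fin m → ℝ) (hd : ∀ i, 0 < d i) (x : Fin m → ℝ) :
    iteratedDeriv k (fun t : ℝ => ∏ i, (x i + t * d i)) 0
      = (k.factorial : ℝ) * (∏ i, d i) *
        ∑ s ∈ Finset.powersetCard (m - k) (Finset.univ : Finset (Fin m)),
          ∏ i ∈ s, x i / d i := by
  have hpoly : (fun t : ℝ => ∏ i, (x i + t * d i))
      = fun t => (C (∏ i, d i) * ∏ i, (X + C (x i / d i))).eval t := by
    funext t
    rw [eval_mul, eval_C, eval_prod, ← prod_mul_distrib]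
    refine prod_congr rfl fun i _ => ?_
    rw [eval_add, eval_X, eval_C, mul_add, mul_div_cancel₀ _ (hd i).ne']
    ring
  rw [hpoly, iteratedDeriv_eval_zero, coeff_C_mul,
    prod_X_add_C_coeff _ _ (by simpa using hk), card_univ, Fintype.card_fin, mul_assoc]
end

section
/- The hyperbolicity cone of a hyperbolic polynomial p of degree m with respect to d admits the characterization C(d) = {x ∈ X : p(x) > 0, p'(x) > 0, ..., p^{(m−1)}(x) > 0}, where p^{(k)} denotes the k-th directional derivative of p along d. -/
open Polynomial in
lemma iteratedDeriv_polyEval (k : ℕ) (P : Polynomial ℝ) :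
    iteratedDeriv k (fun t : ℝ => P.eval t) = fun t => (derivative^[k] P).eval t := by
  induction k with
  | zero => simp
  | succ n ih =>
    rw [iteratedDeriv_succ, ih]
    funext t
    rw [Function.iterate_succ_apply']
    exact Polynomial.deriv _

open Polynomial in
lemma iteratedDeriv_polyEval_zero (k : ℕ) (P : Polynomial ℝ) :
    iteratedDeriv k (fun t : ℝ => P.eval t) 0 = (Nat.factorial k : ℝ) * P.coeff k := by
  rw [iteratedDeriv_polyEval]
  simp only [← Polynomial.coeff_zero_eq_eval_zero, Polynomial.coeff_iterate_derivative]
  simp [Nat.descFactorial_self, nsmul_eq_mul]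

/-- The hyperbolicity cone admits the characterization
`C(d) = {x | p(x) > 0, p'(x) > 0, …, p^{(m−1)}(x) > 0}`, where
`p^{(k)}(x) = (d^k/dt^k) p(x + t•d)|_{t=0}`. -/
theorem hyperbolicity_cone_derivative_characterization
    {X : Type*} [AddCommGroup X] [Module ℝ X]
    (m : ℕ) (p : X → ℝ) (d : X)
    (hhom : ∀ (c : ℝ) (x : X), p (c • x) = c ^ m * p x)
    (hpd : 0 < p d)
    (lam : X → Fin m → ℝ)
    (hmono : ∀ x, Monotone (lam x))
    (hroots : ∀ (x : X) (t : ℝ), p (x + t • d) = p d * ∏ i, (t + lam x i)) :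
    {x : X | ∀ t : ℝ, 0 ≤ t → p (x + t • d) ≠ 0}
      = {x : X | ∀ k : ℕ, k < m → 0 < iteratedDeriv k (fun t : ℝ => p (x + t • d)) 0} := by
  ext x
  set Q : Polynomial ℝ := Polynomial.C (p d) * ∏ i : Fin m, (Polynomial.X + Polynomial.C (lam x i))
    with hQ
  have hevalQ : ∀ t : ℝ, p (x + t • d) = Q.eval t := by
    intro t
    simp [hQ, hroots x t, Polynomial.eval_prod]
  have hfun : (fun t : ℝ => p (x + t • d)) = fun t => Q.eval t := funext hevalQ
  have hcoeff : ∀ k : ℕ, k ≤ m → Q.coeff k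
      = p d * ∑ s ∈ Finset.powersetCard (m - k) Finset.univ, ∏ i ∈ s, lam x i := by
    intro k hk
    rw [hQ, Polynomial.coeff_C_mul,
      Finset.prod_X_add_C_coeff (Finset.univ : Finset (Fin m)) (lam x)
        (by simpa using hk)]
    simp
  have hderiv : ∀ k : ℕ, iteratedDeriv k (fun t : ℝ => p (x + t • d)) 0
      = (Nat.factorial k : ℝ) * Q.coeff k := by
    intro k; rw [hfun, iteratedDeriv_polyEval_zero]
  constructor
  · -- cone → derivatives positive
    intro hx k hk
    have hlampos : ∀ i : Fin m, 0 < lam x i := by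
      intro i
      by_contra hle
      push_neg at hle
      apply hx (-(lam x i)) (by linarith)
      rw [hroots]
      have : ∏ j : Fin m, (-(lam x i) + lam x j) = 0 :=
        Finset.prod_eq_zero (Finset.mem_univ i) (by ring)
      rw [this, mul_zero]
    rw [hderiv, hcoeff k hk.le]
    have hsum : 0 < ∑ s ∈ Finset.powersetCard (m - k) Finset.univ, ∏ i ∈ s, lam x i := by
      apply Finset.sum_pos
      · intro s _
        exact Finset.prod_pos fun i _ => hlampos i
      · rw [Finset.powersetCard_nonempty]
        simp [Nat.sub_le]
    positivity
  · -- derivatives positive → cone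
    intro hx t ht
    have hcoeffpos : ∀ k : ℕ, k < m → 0 < Q.coeff k := by
      intro k hk
      have := hx k hk
      rw [hderiv] at this
      have hf : (0 : ℝ) < (Nat.factorial k : ℝ) := by positivity
      nlinarith
    have hcoeffm : Q.coeff m = p d := by
      rw [hcoeff m le_rfl]
      simp
    have hdeg : Q.natDegree ≤ m := by
      rw [hQ]
      refine le_trans (Polynomial.natDegree_mul_le) ?_
      simp only [Polynomial.natDegree_C, zero_add]
      refine le_trans (Polynomial.natDegree_prod_le _ _) ?_
      simp [Polynomial.natDegree_X_add_C]
    have heval : Q.eval t = ∑ i ∈ Finset.range (m + 1), Q.coeff i * t ^ i :=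
      Polynomial.eval_eq_sum_range' (lt_of_le_of_lt hdeg (Nat.lt_succ_self m)) t
    have hpos : 0 < Q.eval t := by
      rcases Nat.eq_zero_or_pos m with hm | hm
      · subst hm
        simpa [heval, hcoeffm] using hpd
      · rw [heval]
        have h0 : 0 < Q.coeff 0 * t ^ 0 := by simpa using hcoeffpos 0 hm
        have : ∀ i ∈ Finset.range (m + 1), 0 ≤ Q.coeff i * t ^ i := by
          intro i hi
          rcases lt_or_eq_of_le (Nat.lt_succ_iff.mp (Finset.mem_range.mp hi)) with h | h
          · exact mul_nonneg (hcoeffpos i h).le (pow_nonneg ht i)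
          · subst h; rw [hcoeffm]; positivity
        calc (0:ℝ) < Q.coeff 0 * t ^ 0 := h0
          _ ≤ _ := Finset.single_le_sum this (Finset.mem_range.mpr (Nat.succ_pos m))
    rw [hevalQ]
    exact ne_of_gt hpos
end

section
/- The hyperbolicity cones of successive directional derivatives of a hyperbolic polynomial are nested: C(d) ⊆ C'(d) ⊆ C''(d) ⊆ ... ⊆ C^{(m−1)}(d), where C^{(k)}(d) is the hyperbolicity cone of the k-th derivative polynomial p^{(k)} with respect to d. -/
/-!
On every line `t ↦ x + t • d` the polynomial `p` is `p d * ∏ (t + λᵢ)`, so it is real-rooted, and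
by Rolle's theorem so are all its derivatives in `t`. If the `k`-th derivative does not vanish on
`[0, ∞)`, all of its roots are negative, and the logarithmic derivative `∑ 1 / (t - z)` of a
real-rooted polynomial is positive to the right of all its roots, so the `(k + 1)`-st derivative
does not vanish there either.
-/

open Polynomial

namespace Polynomial

theorem card_roots_le_iterate_derivative (p : ℝ[X]) (k : ℕ) :
    Multiset.card p.roots ≤ Multiset.card (derivative^[k] p).roots + k := by
  induction k generalizing p with
  | zero => simp
  | succ k ih =>
    calc Multiset.card p.roots ≤ Multiset.card (derivative p).roots + 1 :=
          card_roots_le_derivative p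
      _ ≤ Multiset.card (derivative^[k + 1] p).roots + (k + 1) := by
          rw [Function.iterate_succ_apply]; linarith [ih (derivative p)]

theorem Splits.iterate_derivative {p : ℝ[X]} (hp : p.Splits) (k : ℕ) :
    (derivative^[k] p).Splits := by
  have hroots := card_roots_le_iterate_derivative p k
  have hdeg := natDegree_iterate_derivative p k
  have hcard := card_roots' (derivative^[k] p)
  rw [← hp.natDegree_eq_card_roots] at hroots
  rw [splits_iff_card_roots]
  omega

theorem Splits.natDegree_iterate_derivative {p : ℝ[X]} (hp : p.Splits) (k : ℕ) :
    (derivative^[k] p).natDegree = p.natDegree - k := by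
  have hroots := card_roots_le_iterate_derivative p k
  rw [← hp.natDegree_eq_card_roots, ← (hp.iterate_derivative k).natDegree_eq_card_roots] at hroots
  have := p.natDegree_iterate_derivative k
  omega

theorem Splits.eval_derivative_ne_zero_of_roots_lt {R : Type*} [Field R] [LinearOrder R]
    [IsStrictOrderedRing R] {f : R[X]} (hf : f.Splits) (hdeg : f.natDegree ≠ 0) {x : R}
    (hx : ∀ z ∈ f.roots, z < x) : f.derivative.eval x ≠ 0 := by
  have hf0 : f ≠ 0 := by rintro rfl; exact hdeg natDegree_zero
  have hfx : f.eval x ≠ 0 := fun h => (hx x ((mem_roots hf0).2 h)).false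
  have hsum : 0 < (f.roots.map fun z => 1 / (x - z)).sum := by
    simpa using Multiset.sum_lt_sum_of_nonempty (f := fun _ => (0 : R))
      (hf.roots_ne_zero hdeg) fun z hz => one_div_pos.2 (sub_pos.2 (hx z hz))
  rw [hf.eval_derivative_eq_eval_mul_sum hfx]
  exact mul_ne_zero hfx hsum.ne'

theorem iteratedDeriv_eval_s15 {𝕜 : Type*} [NontriviallyNormedField 𝕜] (q : 𝕜[X]) (n : ℕ) :
    iteratedDeriv n (fun x => q.eval x) = fun x => (derivative^[n] q).eval x := by
  induction n with
  | zero => simp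
  | succ n ih =>
    rw [iteratedDeriv_succ, ih, Function.iterate_succ_apply']
    funext x
    exact Polynomial.deriv _

end Polynomial

theorem iteratedDeriv_along_line_eq_eval {X : Type*} [AddCommGroup X] [Module ℝ X]
    {f : X → ℝ} {x d : X} {q : ℝ[X]} (hq : ∀ u : ℝ, q.eval u = f (x + u • d)) (n : ℕ) (t : ℝ) :
    iteratedDeriv n (fun s : ℝ => f ((x + t • d) + s • d)) 0 = (derivative^[n] q).eval t := by
  have hline : (fun s : ℝ => f ((x + t • d) + s • d)) = fun s => q.eval (t + s) := by
    funext s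
    rw [hq, add_smul, add_assoc]
  rw [hline, iteratedDeriv_comp_const_add n (fun u => q.eval u) t, iteratedDeriv_eval_s15]
  simp only [add_zero]

theorem derivative_cones_nested_general {X : Type*} [AddCommGroup X] [Module ℝ X]
    (m : ℕ) (p : X → ℝ) (d : X)
    (hpd : 0 < p d)
    (lam : X → Fin m → ℝ)
    (hroots : ∀ (x : X) (t : ℝ), p (x + t • d) = p d * ∏ i, (t + lam x i)) :
    ∀ k : ℕ, k + 2 ≤ m →
      {x : X | ∀ t : ℝ, 0 ≤ t →
          iteratedDeriv k (fun s : ℝ => p ((x + t • d) + s • d)) 0 ≠ 0}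
        ⊆ {x : X | ∀ t : ℝ, 0 ≤ t →
            iteratedDeriv (k + 1) (fun s : ℝ => p ((x + t • d) + s • d)) 0 ≠ 0} := by
  intro k hk x hx t ht
  set P : ℝ[X] := C (p d) * ∏ i, (Polynomial.X + C (lam x i))
  have hP : ∀ u : ℝ, P.eval u = p (x + u • d) := by simp [P, hroots, eval_prod]
  have hPsplits : P.Splits := (Splits.C _).mul (Splits.prod fun i _ => Splits.X_add_C _)
  have hPdeg : P.natDegree = m := by
    rw [natDegree_C_mul hpd.ne', natDegree_prod_of_monic _ _ fun i _ => monic_X_add_C _]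
    simp
  have hQdeg : (derivative^[k] P).natDegree ≠ 0 := by
    rw [hPsplits.natDegree_iterate_derivative, hPdeg]
    omega
  simp only [Set.mem_ofPred_eq, iteratedDeriv_along_line_eq_eval hP] at hx ⊢
  rw [Function.iterate_succ_apply']
  refine (hPsplits.iterate_derivative k).eval_derivative_ne_zero_of_roots_lt hQdeg fun z hz => ?_
  by_contra! htz
  exact hx z (ht.trans htz) (isRoot_of_mem_roots hz)

/-- The hyperbolicity cones of successive directional derivatives of a
hyperbolic polynomial are nested: `C(d) = C^{(0)}(d) ⊆ C^{(1)}(d) ⊆ ⋯ ⊆ C^{(m−1)}(d)`,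
where `C^{(k)}(d)` is the hyperbolicity cone of `p^{(k)}(x) = (d^k/dt^k) p(x + t•d)|_{t=0}`. -/
theorem derivative_cones_nested {X : Type*} [AddCommGroup X] [Module ℝ X]
    (m : ℕ) (p : X → ℝ) (d : X)
    (hhom : ∀ (c : ℝ) (x : X), p (c • x) = c ^ m * p x)
    (hpd : 0 < p d)
    (lam : X → Fin m → ℝ)
    (hmono : ∀ x, Monotone (lam x))
    (hroots : ∀ (x : X) (t : ℝ), p (x + t • d) = p d * ∏ i, (t + lam x i)) :
    ∀ k : ℕ, k + 2 ≤ m →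
      {x : X | ∀ t : ℝ, 0 ≤ t →
          iteratedDeriv k (fun s : ℝ => p ((x + t • d) + s • d)) 0 ≠ 0}
        ⊆ {x : X | ∀ t : ℝ, 0 ≤ t →
            iteratedDeriv (k + 1) (fun s : ℝ => p ((x + t • d) + s • d)) 0 ≠ 0} :=
  derivative_cones_nested_general m p d hpd lam hroots
end
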